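/- Let p be a prime, let k be a field of prime characteristic q, and suppose q divides p−1. Let a : ℕ → k be the p-pertinent sequence, i.e. a(n) = 0 if p ∣ n and a(n) = 1 otherwise. Then (1) a satisfies the polynomial x^{p−1} + x^{p−2} + ⋯ + x + 1, i.e. Σ_{i=0}^{p−1} a(n+i) = 0 for all n; and (2) a does not satisfy any nonzero polynomial of degree strictly less than p−1. Consequently the minimal polynomial of the p-pertinent sequence in this case is x^{p−1} + x^{p−2} + ⋯ + x + 1. -/

import Mathlib

/-!
Any window of `p` consecutive terms of the `p`-pertinent sequence contains exactly one multiple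
of `p`, so its sum is `p - 1`, which vanishes in characteristic `q ∣ p - 1`.

If `f` has degree `m < p - 1`, the window of length `m + 1` starting at `1` contains no multiple
of `p`, while the one starting at `p - m` contains exactly one, in its last place. Applying `f` to
these two windows gives `∑_{i ≤ m} fᵢ` and `∑_{i < m} fᵢ`; if both vanished, so would the leading
coefficient `fₘ`.
-/

open Finset Polynomial

section

variable (R : Type*)

def pertinentSeq [Zero R] [One R] (p n : ℕ) : R := if p ∣ n then 0 else 1

variable {R}

theorem pertinentSeq_of_pos_of_lt [Zero R] [One R] {p n : ℕ} (h0 : 0 < n) (hn : n < p) :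
    pertinentSeq R p n = 1 :=
  if_neg (Nat.not_dvd_of_pos_of_lt h0 hn)

theorem pertinentSeq_self [Zero R] [One R] (p : ℕ) : pertinentSeq R p p = 0 :=
  if_pos dvd_rfl

theorem Nat.count_not_dvd_self (p : ℕ) : p.count (fun m => ¬ p ∣ m) = p - 1 := by
  rcases p with _ | m
  · simp
  · rw [Nat.count_succ',
      Nat.count_iff_forall.mpr fun i hi => Nat.not_dvd_of_pos_of_lt i.succ_pos (by omega)]
    simp

theorem sum_range_pertinentSeq [AddCommMonoidWithOne R] (p n : ℕ) :
    ∑ i ∈ range p, pertinentSeq R p (n + i) = ((p - 1 : ℕ) : R) := by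
  have hper : Function.Periodic (fun m => ¬ p ∣ m) p := fun m => by
    simp [Nat.dvd_add_self_right]
  rw [← Nat.count_not_dvd_self, ← Nat.filter_Ico_card_eq_of_periodic n p _ hper,
    natCast_card_filter, sum_Ico_eq_sum_range, Nat.add_sub_cancel_left]
  simp only [pertinentSeq, ite_not]

section

variable [NonAssocSemiring R] {p m : ℕ} (c : ℕ → R)

theorem sum_range_mul_pertinentSeq_one_add (hm : m + 1 < p) :
    ∑ i ∈ range (m + 1), c i * pertinentSeq R p (1 + i) = ∑ i ∈ range (m + 1), c i :=
  sum_congr rfl fun i hi => by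
    rw [pertinentSeq_of_pos_of_lt (by omega) (by simp at hi; omega), mul_one]

theorem sum_range_mul_pertinentSeq_sub_add (hm : m < p) :
    ∑ i ∈ range (m + 1), c i * pertinentSeq R p (p - m + i) = ∑ i ∈ range m, c i := by
  rw [sum_range_succ, Nat.sub_add_cancel hm.le, pertinentSeq_self, mul_zero, add_zero]
  exact sum_congr rfl fun i hi => by
    rw [pertinentSeq_of_pos_of_lt (by omega) (by simp at hi; omega), mul_one]

end

theorem Polynomial.exists_sum_coeff_mul_pertinentSeq_ne_zero [Semiring R] {p : ℕ} {f : R[X]}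
    (hf : f ≠ 0) (hdeg : f.natDegree < p - 1) :
    ∃ n, ∑ i ∈ range (f.natDegree + 1), f.coeff i * pertinentSeq R p (n + i) ≠ 0 := by
  by_contra! h
  have hstart_one := h 1
  rw [sum_range_mul_pertinentSeq_one_add _ (by omega), sum_range_succ,
    ← sum_range_mul_pertinentSeq_sub_add f.coeff (p := p) (by omega), h, zero_add] at hstart_one
  exact hf (leadingCoeff_eq_zero.mp hstart_one)

end

theorem p_pertinent_minimal_poly_char_dvd_general
    (p q : ℕ) (k : Type*) [Field k] [CharP k q]
    (hqp : q ∣ p - 1)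
    (a : ℕ → k) (ha : ∀ n : ℕ, a n = if p ∣ n then 0 else 1) :
    (∀ n : ℕ, ∑ i ∈ Finset.range p, a (n + i) = 0) ∧
    (∀ f : Polynomial k, f ≠ 0 → f.natDegree < p - 1 →
      ∃ n : ℕ, ∑ i ∈ Finset.range (f.natDegree + 1), f.coeff i * a (n + i) ≠ 0) := by
  obtain rfl : a = pertinentSeq k p := funext ha
  refine ⟨fun n => ?_, fun f hf hdeg => f.exists_sum_coeff_mul_pertinentSeq_ne_zero hf hdeg⟩
  rw [sum_range_pertinentSeq, CharP.cast_eq_zero_iff k q]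
  exact hqp

/-- Let `p` be a prime and `k` a field of prime characteristic `q` with
`q ∣ p - 1`.  Let `a : ℕ → k` be the `p`-pertinent sequence (`a n = 0` if `p ∣ n`, `a n = 1`
otherwise).  Then `a` satisfies the polynomial `x^(p-1) + x^(p-2) + ⋯ + x + 1`
(i.e. `∑_{i=0}^{p-1} a (n + i) = 0` for all `n`), and `a` satisfies no nonzero polynomial of
degree strictly less than `p - 1`; hence the minimal polynomial of the `p`-pertinent sequence
in this case is `x^(p-1) + ⋯ + x + 1`. -/
theorem p_pertinent_minimal_poly_char_dvd
    (p q : ℕ) (hp : p.Prime) (hq : q.Prime) (k : Type*) [Field k] [CharP k q]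
    (hqp : q ∣ p - 1)
    (a : ℕ → k) (ha : ∀ n : ℕ, a n = if p ∣ n then 0 else 1) :
    (∀ n : ℕ, ∑ i ∈ Finset.range p, a (n + i) = 0) ∧
    (∀ f : Polynomial k, f ≠ 0 → f.natDegree < p - 1 →
      ∃ n : ℕ, ∑ i ∈ Finset.range (f.natDegree + 1), f.coeff i * a (n + i) ≠ 0) :=
  p_pertinent_minimal_poly_char_dvd_general p q k hqp a ha
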